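/- Fix a nonnegative integer n. Define f_n : ℂ → ℂ by f_n(w) = 1 / ( ∑_{s=0}^{n+1} fib-binom(n+1, s)·(−1)^{⌈(n−s+1)/2⌉}·w^{n−s+1} ), define the operator D by (D g)(w) = w·g′(w), and set A_n(w; m) = (Dᵐ f_n)(w). Then for every nonnegative integer m and every w ∈ ℂ where the denominator of f_n is nonzero, A_n(w; m) · ∑_{s=0}^{n+1} fib-binom(n+1, s)·(−1)^{⌈(n−s+1)/2⌉}·w^{n−s+1} = δ_{m,0} − ∑_{j=0}^{m−1} C(m, j)·A_n(w; j) · ∑_{s=0}^{n} fib-binom(n+1, s)·(−1)^{⌈(n−s+1)/2⌉}·(n−s+1)^{m−j}·w^{n−s+1}. -/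

import Mathlib

/-- The Fibonomial coefficient `fib-binom(p, q) = ∏_{j=1}^{q} F(p-q+j) / F(j)`. -/
noncomputable def fibBinom (p q : ℕ) : ℂ :=
  ∏ j ∈ Finset.Icc 1 q, (Nat.fib (p - q + j) : ℂ) / (Nat.fib j : ℂ)

/-- The operator `D` acting on functions `g : ℂ → ℂ` by `(D g)(w) = w * g'(w)`. -/
noncomputable def Dop (g : ℂ → ℂ) : ℂ → ℂ := fun w => w * deriv g w

/-- `An n w m = (Dᵐ f_n)(w)` where
`f_n w = 1 / (∑_{s=0}^{n+1} fib-binom(n+1,s) (-1)^{⌈(n-s+1)/2⌉} w^{n-s+1})`. -/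
noncomputable def An (n : ℕ) (w : ℂ) (m : ℕ) : ℂ :=
  (Dop^[m] (fun z => 1 / ∑ s ∈ Finset.range (n + 2),
    fibBinom (n + 1) s * (-1 : ℂ) ^ ((n + 1 - s + 1) / 2) * z ^ (n + 1 - s))) w

/-!
Write `Δ` for the denominator of `f_n`, so that `f_n * Δ = 1` wherever `Δ ≠ 0`. The operator
`D = w d/dw` is a derivation, hence obeys the Leibniz rule
`Dᵐ (f * g) = ∑_j C(m, j) Dʲ f * Dᵐ⁻ʲ g`, and it acts diagonally on monomials: `D wᵉ = e wᵉ`.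
Applying `Dᵐ` to `f_n * Δ = 1` and isolating the term `j = m` gives the recurrence; in the terms
with `j < m` the constant term of `Δ` drops out of `Dᵐ⁻ʲ Δ`.
-/

open Finset Filter Topology

section Dop

variable {f g : ℂ → ℂ} {U : Set ℂ}

lemma Dop_iterate_succ_apply (m : ℕ) (f : ℂ → ℂ) (z : ℂ) :
    Dop^[m + 1] f z = z * deriv (Dop^[m] f) z := by
  rw [Function.iterate_succ_apply']
  rfl

lemma Filter.EventuallyEq.Dop_iterate {w : ℂ} (h : f =ᶠ[𝓝 w] g) (m : ℕ) :
    Dop^[m] f =ᶠ[𝓝 w] Dop^[m] g := by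
  induction m with
  | zero => exact h
  | succ m ih =>
    filter_upwards [ih.eventuallyEq_nhds] with z hz
    rw [Dop_iterate_succ_apply, Dop_iterate_succ_apply, hz.deriv_eq]

lemma Dop_iterate_const (c : ℂ) (m : ℕ) :
    Dop^[m] (fun _ => c) = fun _ => if m = 0 then c else 0 := by
  induction m with
  | zero => rfl
  | succ m ih =>
    funext z
    rw [Dop_iterate_succ_apply, ih, deriv_const, mul_zero, if_neg m.succ_ne_zero]

lemma DifferentiableOn.Dop_iterate (hU : IsOpen U) (hf : DifferentiableOn ℂ f U) (m : ℕ) :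
    DifferentiableOn ℂ (Dop^[m] f) U := by
  induction m with
  | zero => exact hf
  | succ m ih =>
    rw [Function.iterate_succ']
    exact differentiableOn_id.mul (ih.deriv hU)

lemma Dop_iterate_mul_eqOn (hU : IsOpen U) (hf : DifferentiableOn ℂ f U)
    (hg : DifferentiableOn ℂ g U) (m : ℕ) :
    Set.EqOn (Dop^[m] (f * g))
      (fun z => ∑ i ∈ range (m + 1), (m.choose i : ℂ) * (Dop^[i] f z * Dop^[m - i] g z)) U := by
  induction m with
  | zero => intro z _; simp
  | succ m ih =>
    intro z hz
    have hfi (i : ℕ) : DifferentiableAt ℂ (Dop^[i] f) z :=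
      (hf.Dop_iterate hU i).differentiableAt (hU.mem_nhds hz)
    have hgi (i : ℕ) : DifferentiableAt ℂ (Dop^[i] g) z :=
      (hg.Dop_iterate hU i).differentiableAt (hU.mem_nhds hz)
    rw [Dop_iterate_succ_apply, (ih.eventuallyEq_of_mem (hU.mem_nhds hz)).deriv_eq,
      deriv_fun_sum fun i _ => ((hfi i).fun_mul (hgi (m - i))).const_mul _, mul_sum]
    change _ = ∑ i ∈ range (m + 2), _
    rw [Finset.sum_choose_succ_mul (fun i k => Dop^[i] f z * Dop^[k] g z), ← sum_add_distrib]
    refine sum_congr rfl fun i hi => ?_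
    have him : m + 1 - i = m - i + 1 := by have := mem_range.mp hi; omega
    rw [deriv_const_mul _ ((hfi i).fun_mul (hgi (m - i))), deriv_fun_mul (hfi i) (hgi (m - i)), him,
      Dop_iterate_succ_apply i f z, Dop_iterate_succ_apply (m - i) g z]
    ring

lemma Dop_pow_apply (e : ℕ) (z : ℂ) : Dop (fun z => z ^ e) z = e * z ^ e := by
  rw [Dop, deriv_pow_field]
  cases e with
  | zero => simp
  | succ e => rw [Nat.add_sub_cancel, pow_succ]; push_cast; ring

lemma Dop_iterate_sum_monomial {ι : Type*} (s : Finset ι) (c : ι → ℂ) (e : ι → ℕ) (k : ℕ) :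
    Dop^[k] (fun z => ∑ i ∈ s, c i * z ^ e i) =
      fun z => ∑ i ∈ s, c i * (e i : ℂ) ^ k * z ^ e i := by
  induction k with
  | zero => simp
  | succ k ih =>
    funext z
    rw [Dop_iterate_succ_apply, ih, deriv_fun_sum fun i _ => (differentiableAt_pow _).const_mul _,
      mul_sum]
    refine sum_congr rfl fun i _ => ?_
    have h : z * deriv (fun z => z ^ e i) z = e i * z ^ e i := Dop_pow_apply (e i) z
    rw [deriv_const_mul _ (differentiableAt_pow _)]
    linear_combination (c i * (e i : ℂ) ^ k) * h

lemma Dop_iterate_sum_range_pow_sub (N : ℕ) (c : ℕ → ℂ) {k : ℕ} (hk : k ≠ 0) (w : ℂ) :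
    Dop^[k] (fun z => ∑ s ∈ range (N + 1), c s * z ^ (N - s)) w =
      ∑ s ∈ range N, c s * ((N - s : ℕ) : ℂ) ^ k * w ^ (N - s) := by
  rw [Dop_iterate_sum_monomial]
  simp [sum_range_succ _ N, hk]

lemma Dop_iterate_one_div_mul_self {w : ℂ} (hU : IsOpen U)
    (hg : DifferentiableOn ℂ g U) (hw : w ∈ U) (hgw : g w ≠ 0) (m : ℕ) :
    Dop^[m] (fun z => 1 / g z) w * g w =
      (if m = 0 then 1 else 0) -
        ∑ j ∈ range m, (m.choose j : ℂ) * Dop^[j] (fun z => 1 / g z) w * Dop^[m - j] g w := by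
  set V := U ∩ g ⁻¹' {0}ᶜ
  have hV : IsOpen V := hg.continuousOn.isOpen_inter_preimage hU isOpen_compl_singleton
  have hwV : w ∈ V := ⟨hw, hgw⟩
  have hgV : DifferentiableOn ℂ g V := hg.mono Set.inter_subset_left
  have hinv : DifferentiableOn ℂ (fun z => 1 / g z) V :=
    (differentiableOn_const 1).div hgV fun _ hz => hz.2
  have hone : (fun z => 1 / g z) * g =ᶠ[𝓝 w] fun _ => 1 := by
    filter_upwards [hV.mem_nhds hwV] with z hz using one_div_mul_cancel hz.2
  have hleib := Dop_iterate_mul_eqOn hV hinv hgV m hwV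
  rw [(hone.Dop_iterate m).eq_of_nhds, Dop_iterate_const] at hleib
  beta_reduce at hleib
  rw [hleib, sum_range_succ, Nat.choose_self, Nat.sub_self]
  simp only [Nat.cast_one, one_mul, Function.iterate_zero, id, mul_assoc]
  ring

end Dop

theorem An_recurrence (n m : ℕ) (w : ℂ)
    (hΔ : ∑ s ∈ Finset.range (n + 2),
      fibBinom (n + 1) s * (-1 : ℂ) ^ ((n + 1 - s + 1) / 2) * w ^ (n + 1 - s) ≠ 0) :
    An n w m * ∑ s ∈ Finset.range (n + 2),
        fibBinom (n + 1) s * (-1 : ℂ) ^ ((n + 1 - s + 1) / 2) * w ^ (n + 1 - s) =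
      (if m = 0 then 1 else 0) -
        ∑ j ∈ Finset.range m, (m.choose j : ℂ) * An n w j *
          ∑ s ∈ Finset.range (n + 1),
            fibBinom (n + 1) s * (-1 : ℂ) ^ ((n + 1 - s + 1) / 2) *
              ((n + 1 - s : ℕ) : ℂ) ^ (m - j) * w ^ (n + 1 - s) := by
  have hΔ_diff : Differentiable ℂ fun z => ∑ s ∈ Finset.range (n + 2),
      fibBinom (n + 1) s * (-1 : ℂ) ^ ((n + 1 - s + 1) / 2) * z ^ (n + 1 - s) := by fun_prop
  refine (Dop_iterate_one_div_mul_self isOpen_univ hΔ_diff.differentiableOn (Set.mem_univ w) hΔ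
    m).trans (congrArg _ (sum_congr rfl fun j hj => ?_))
  exact congrArg ((m.choose j : ℂ) * An n w j * ·) (Dop_iterate_sum_range_pow_sub (n + 1)
    (fun s => fibBinom (n + 1) s * (-1 : ℂ) ^ ((n + 1 - s + 1) / 2))
    (Nat.sub_ne_zero_of_lt (mem_range.mp hj)) w)
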